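/- With p_i = (i/(i+1))^α for some α ∈ (1,2), in the Markov shift on ℕ^ℤ described above with U = {ω_0 = 1}, the return time τ_U is integrable over U (by Kac) but ∫_Ω τ_U dμ = Σ_{j,k} k x_1 P_{j+k−1} q_{j+k−1} = ∞. -/

import Mathlib

/-!
Almost every path of the chain either climbs `j ↦ j + 1` or resets to `1`, so on
`U = {ω 0 = 1}` the event `n < τ_U` is, up to a null set, the cylinder `1, 2, …, n + 1`,
of measure `x₁ (n + 1)^(-α)`; summing over `n` (`α > 1`) gives `∫_U τ_U < ∞`.
For `1 ≤ j ≤ N` the disjoint cylinders `j, j + 1, …, j + N` avoid `1` for `N` steps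
and each has measure at least `x₁ (2N)^(-α)`, so `∫ τ_U ≥ x₁ 2^(-α) N^(2-α) → ∞` (`α < 2`).
-/

open MeasureTheory Set Function ENNReal Real

/-- First entry time to `B` under `T` (`⊤` if the orbit never enters `B`). -/
noncomputable def tauE {Ω : Type*} (T : Ω → Ω) (B : Set Ω) (x : Ω) : ℕ∞ :=
  sInf ((fun j : ℕ => (j : ℕ∞)) '' {j : ℕ | 0 < j ∧ T^[j] x ∈ B})

/-- The two-sided shift on `ℕ^ℤ`. -/
def shift (ω : ℤ → ℕ) : ℤ → ℕ := fun n => ω (n + 1)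

lemma ENat.toENNReal_eq_tsum_ite_lt (a : ℕ∞) :
    (a : ℝ≥0∞) = ∑' n : ℕ, if (n : ℕ∞) < a then 1 else 0 := by
  induction a using ENat.recTopCoe with
  | top => simp
  | coe m =>
    simp only [ENat.toENNReal_coe, Nat.cast_lt]
    rw [tsum_eq_sum (s := Finset.range m) (fun n hn => if_neg (by simpa using hn)),
      Finset.sum_ite_of_true (fun n hn => Finset.mem_range.mp hn)]
    simp

lemma lintegral_toENNReal_eq_tsum_measure_lt {α : Type*} [MeasurableSpace α] {μ : Measure α}
    {f : α → ℕ∞} (hf : ∀ n : ℕ, MeasurableSet {x | (n : ℕ∞) < f x}) :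
    ∫⁻ x, (f x : ℝ≥0∞) ∂μ = ∑' n : ℕ, μ {x | (n : ℕ∞) < f x} := by
  have hind (x : α) : (f x : ℝ≥0∞) = ∑' n : ℕ, {x | (n : ℕ∞) < f x}.indicator 1 x := by
    simp only [ENat.toENNReal_eq_tsum_ite_lt, indicator_apply, mem_ofPred_eq, Pi.one_apply]
  simp_rw [hind]
  rw [lintegral_tsum fun n => (measurable_one.indicator (hf n)).aemeasurable]
  simp_rw [lintegral_indicator_one (hf _)]

section FirstEntry

variable {Ω : Type*} {T : Ω → Ω} {B : Set Ω}

lemma natCast_lt_tauE_iff {n : ℕ} {x : Ω} :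
    (n : ℕ∞) < tauE T B x ↔ ∀ j, 0 < j → j ≤ n → T^[j] x ∉ B := by
  rw [tauE, ← ENat.add_one_le_iff (ENat.natCast_ne_top n), le_sInf_iff, forall_mem_image]
  refine forall_congr' fun j => ?_
  rw [← Nat.cast_one, ← Nat.cast_add, Nat.cast_le]
  grind

lemma measurableSet_natCast_lt_tauE [MeasurableSpace Ω] (hT : Measurable T)
    (hB : MeasurableSet B) (n : ℕ) : MeasurableSet {x | (n : ℕ∞) < tauE T B x} := by
  have : {x | (n : ℕ∞) < tauE T B x} = ⋂ j ∈ Finset.Icc 1 n, T^[j] ⁻¹' Bᶜ := by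
    ext x
    simp [natCast_lt_tauE_iff, Nat.pos_iff_ne_zero, Nat.one_le_iff_ne_zero]
  rw [this]
  exact Finset.measurableSet_biInter _ fun j _ => (hT.iterate j) hB.compl

end FirstEntry

lemma shift_iterate_apply (ω : ℤ → ℕ) (j : ℕ) (m : ℤ) : shift^[j] ω m = ω (m + j) := by
  induction j generalizing ω with
  | zero => simp
  | succ j ih =>
    rw [iterate_succ_apply, ih, shift]
    push_cast
    ring_nf

lemma measurable_shift : Measurable shift :=
  measurable_pi_lambda _ fun n => measurable_pi_apply (n + 1)

lemma natCast_lt_tauE_shift_iff {a n : ℕ} {ω : ℤ → ℕ} :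
    (n : ℕ∞) < tauE shift {ω | ω 0 = a} ω ↔ ∀ j : ℕ, 0 < j → j ≤ n → ω j ≠ a := by
  simp [natCast_lt_tauE_iff, shift_iterate_apply]

def climbCylinder (j n : ℕ) : Set (ℤ → ℕ) := {ω | ∀ i : ℕ, i ≤ n → ω i = j + i}

lemma measurableSet_climbCylinder (j n : ℕ) : MeasurableSet (climbCylinder j n) := by
  have : climbCylinder j n = ⋂ i ∈ Finset.range (n + 1), (fun ω : ℤ → ℕ => ω i) ⁻¹' {j + i} := by
    ext ω
    simp [climbCylinder]
  rw [this]
  exact Finset.measurableSet_biInter _ fun i _ => measurable_pi_apply _ (measurableSet_singleton _)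

lemma climbCylinder_subset_natCast_lt_tauE {j n m : ℕ} (hj : 1 ≤ j) (hm : m ≤ n) :
    climbCylinder j n ⊆ {ω | (m : ℕ∞) < tauE shift {ω | ω 0 = 1} ω} := by
  intro ω hω
  simp only [mem_ofPred_eq, natCast_lt_tauE_shift_iff]
  intro i hi him
  rw [hω i (by omega)]
  omega

lemma mem_climbCylinder_one_of_no_return {ω : ℤ → ℕ}
    (hstep : ∀ i : ℕ, ω ↑(i + 1) = 1 ∨ ω ↑(i + 1) = ω i + 1) (h0 : ω 0 = 1) {n : ℕ}
    (hn : ∀ j : ℕ, 0 < j → j ≤ n → ω j ≠ 1) : ω ∈ climbCylinder 1 n := by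
  intro i hi
  induction i with
  | zero => simpa using h0
  | succ i ih =>
    rcases hstep i with h | h
    · exact absurd h (hn (i + 1) i.succ_pos hi)
    · rw [h, ih (by omega)]
      ring

lemma setLIntegral_tauE_le_tsum_measure_climbCylinder {μ : Measure (ℤ → ℕ)}
    (hstep : ∀ᵐ ω ∂μ, ∀ i : ℕ, ω ↑(i + 1) = 1 ∨ ω ↑(i + 1) = ω i + 1) :
    ∫⁻ ω in {ω | ω 0 = 1}, (tauE shift {ω | ω 0 = 1} ω : ℝ≥0∞) ∂μ ≤
      ∑' n : ℕ, μ (climbCylinder 1 n) := by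
  have hU : MeasurableSet {ω : ℤ → ℕ | ω 0 = 1} :=
    measurable_pi_apply 0 (measurableSet_singleton 1)
  rw [lintegral_toENNReal_eq_tsum_measure_lt
    (measurableSet_natCast_lt_tauE measurable_shift hU)]
  refine ENNReal.tsum_le_tsum fun n => ?_
  rw [Measure.restrict_apply' hU]
  refine measure_mono_ae (hstep.mono fun ω hω ⟨hτ, h0⟩ => ?_)
  exact mem_climbCylinder_one_of_no_return hω h0 (natCast_lt_tauE_shift_iff.mp hτ)

lemma natCast_mul_sum_measure_climbCylinder_le_lintegral_tauE {μ : Measure (ℤ → ℕ)} (N : ℕ) :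
    (N : ℝ≥0∞) * ∑ j ∈ Finset.Icc 1 N, μ (climbCylinder j N) ≤
      ∫⁻ ω, (tauE shift {ω | ω 0 = 1} ω : ℝ≥0∞) ∂μ := by
  have hU : MeasurableSet {ω : ℤ → ℕ | ω 0 = 1} :=
    measurable_pi_apply 0 (measurableSet_singleton 1)
  have hdisj : (↑(Finset.Icc 1 N) : Set ℕ).PairwiseDisjoint (climbCylinder · N) := by
    intro j _ k _ hjk
    refine disjoint_left.mpr fun ω hj hk => hjk ?_
    simpa using (hj 0 (Nat.zero_le _)).symm.trans (hk 0 (Nat.zero_le _))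
  have hunion (n : ℕ) (hn : n ≤ N) : ∑ j ∈ Finset.Icc 1 N, μ (climbCylinder j N) ≤
      μ {ω | (n : ℕ∞) < tauE shift {ω | ω 0 = 1} ω} := by
    rw [← measure_biUnion_finset hdisj fun j _ => measurableSet_climbCylinder j N]
    exact measure_mono (iUnion₂_subset fun j hj =>
      climbCylinder_subset_natCast_lt_tauE (Finset.mem_Icc.mp hj).1 hn)
  rw [lintegral_toENNReal_eq_tsum_measure_lt
    (measurableSet_natCast_lt_tauE measurable_shift hU)]
  calc (N : ℝ≥0∞) * ∑ j ∈ Finset.Icc 1 N, μ (climbCylinder j N)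
      = ∑ n ∈ Finset.range N, ∑ j ∈ Finset.Icc 1 N, μ (climbCylinder j N) := by simp
    _ ≤ ∑ n ∈ Finset.range N, μ {ω | (n : ℕ∞) < tauE shift {ω | ω 0 = 1} ω} :=
      Finset.sum_le_sum fun n hn => hunion n (Finset.mem_range.mp hn).le
    _ ≤ _ := ENNReal.sum_le_tsum _

section MarkovShift

variable {x : ℕ → ℝ} {M : ℕ → ℕ → ℝ} {μ : Measure (ℤ → ℕ)}

lemma ae_transition_ne_zero (hshift : MeasurePreserving shift μ μ)
    (hcyl : ∀ (n : ℕ) (w : ℕ → ℕ),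
      μ {ω : ℤ → ℕ | ∀ i : ℕ, i ≤ n → ω (i : ℤ) = w i} =
        ENNReal.ofReal (x (w 0) * ∏ i ∈ Finset.range n, M (w i) (w (i + 1)))) :
    ∀ᵐ ω ∂μ, ∀ i : ℕ, M (ω i) (ω (i + 1 : ℕ)) ≠ 0 := by
  have hstart : μ {ω | M (ω 0) (ω 1) = 0} = 0 := by
    have hcover : {ω : ℤ → ℕ | M (ω 0) (ω 1) = 0} ⊆
        ⋃ (a : ℕ) (b : ℕ) (_ : M a b = 0),
          {ω : ℤ → ℕ | ∀ i : ℕ, i ≤ 1 → ω (i : ℤ) = if i = 0 then a else b} := by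
      intro ω hω
      simp only [mem_iUnion]
      refine ⟨ω 0, ω 1, hω, fun i hi => ?_⟩
      interval_cases i <;> rfl
    refine measure_mono_null hcover (measure_iUnion_null fun a => measure_iUnion_null fun b =>
      measure_iUnion_null fun hab => ?_)
    simp [hcyl, hab]
  have hmeas : MeasurableSet {ω : ℤ → ℕ | M (ω 0) (ω 1) = 0} := by
    have : Measurable fun ω : ℤ → ℕ => (ω 0, ω 1) :=
      (measurable_pi_apply 0).prodMk (measurable_pi_apply 1)
    exact ((measurable_of_countable (uncurry M)).comp this) (measurableSet_singleton 0)
  refine ae_all_iff.mpr fun i => ae_iff.mpr ?_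
  have hpre : shift^[i] ⁻¹' {ω | M (ω 0) (ω 1) = 0} = {ω | M (ω i) (ω (i + 1 : ℕ)) = 0} := by
    ext ω
    simp [shift_iterate_apply, add_comm]
  simp_rw [not_not, ← hpre, (hshift.iterate i).measure_preimage hmeas.nullMeasurableSet, hstart]

end MarkovShift

section Model

variable {α : ℝ} {p P x : ℕ → ℝ} {M : ℕ → ℕ → ℝ}

lemma eq_rpow_neg_of_prod_ratio_rpow (hp : ∀ i : ℕ, p i = ((i : ℝ) / (i + 1)) ^ α)
    (hP1 : P 1 = 1) (hPrec : ∀ j : ℕ, 1 ≤ j → P (j + 1) = P j * p j) {m : ℕ} (hm : 1 ≤ m) :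
    P m = (m : ℝ) ^ (-α) := by
  induction m, hm using Nat.le_induction with
  | base => simpa using hP1
  | succ m hm ih =>
    have hm0 : (0 : ℝ) < m := by exact_mod_cast hm
    rw [hPrec m hm, ih, hp m, div_rpow hm0.le (by positivity), Real.rpow_neg hm0.le,
      Real.rpow_neg (by positivity)]
    push_cast
    field_simp

lemma eq_one_or_eq_add_one_of_ne_zero
    (hM : ∀ j k : ℕ, 1 ≤ j → M j k = if k = 1 then 1 - p j else if k = j + 1 then p j else 0)
    (hM0 : ∀ k : ℕ, M 0 k = 0) {a b : ℕ} (hab : M a b ≠ 0) : b = 1 ∨ b = a + 1 := by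
  rcases Nat.eq_zero_or_pos a with rfl | ha
  · exact absurd (hM0 b) hab
  · rw [hM a b ha] at hab
    split_ifs at hab <;> tauto

lemma measure_climbCylinder {μ : Measure (ℤ → ℕ)}
    (hM : ∀ j k : ℕ, 1 ≤ j → M j k = if k = 1 then 1 - p j else if k = j + 1 then p j else 0)
    (hPrec : ∀ j : ℕ, 1 ≤ j → P (j + 1) = P j * p j) (hxj : ∀ j : ℕ, 1 ≤ j → x j = x 1 * P j)
    (hcyl : ∀ (n : ℕ) (w : ℕ → ℕ),
      μ {ω : ℤ → ℕ | ∀ i : ℕ, i ≤ n → ω (i : ℤ) = w i} =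
        ENNReal.ofReal (x (w 0) * ∏ i ∈ Finset.range n, M (w i) (w (i + 1))))
    {j : ℕ} (hj : 1 ≤ j) (n : ℕ) :
    μ (climbCylinder j n) = ENNReal.ofReal (x 1 * P (j + n)) := by
  have hclimb : ∀ n : ℕ, P j * ∏ i ∈ Finset.range n, M (j + i) (j + (i + 1)) = P (j + n) := by
    intro n
    induction n with
    | zero => simp
    | succ n ih =>
      rw [Finset.prod_range_succ, ← mul_assoc, ih, hM _ _ (by omega), if_neg (by omega),
        if_pos (by omega), ← add_assoc, hPrec _ (by omega)]
  rw [climbCylinder, hcyl n (j + ·), add_zero, hxj j hj, mul_assoc, hclimb]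

end Model

lemma tendsto_natCast_mul_sum_rpow_neg_atTop {α : ℝ} (hα0 : 0 ≤ α) (hα2 : α < 2) :
    Filter.Tendsto (fun N : ℕ => (N : ℝ) * ∑ j ∈ Finset.Icc 1 N, ((j + N : ℕ) : ℝ) ^ (-α))
      Filter.atTop Filter.atTop := by
  have hlower (N : ℕ) : (2 : ℝ) ^ (-α) * (N : ℝ) ^ (2 - α) ≤
      (N : ℝ) * ∑ j ∈ Finset.Icc 1 N, ((j + N : ℕ) : ℝ) ^ (-α) := by
    rcases N.eq_zero_or_pos with rfl | hN
    · simp [zero_rpow (by linarith : (2 : ℝ) - α ≠ 0)]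
    have hN0 : (0 : ℝ) < N := by exact_mod_cast hN
    have hterm : ∀ j ∈ Finset.Icc 1 N, (2 * N : ℝ) ^ (-α) ≤ ((j + N : ℕ) : ℝ) ^ (-α) := by
      intro j hj
      have hj := Finset.mem_Icc.mp hj
      refine rpow_le_rpow_of_nonpos (by positivity) ?_ (by linarith)
      push_cast
      linarith [(Nat.cast_le (α := ℝ)).mpr hj.2]
    calc (2 : ℝ) ^ (-α) * (N : ℝ) ^ (2 - α) = N * (N * (2 * N : ℝ) ^ (-α)) := by
          rw [mul_rpow (by norm_num) hN0.le, sub_eq_add_neg, rpow_add hN0, Real.rpow_two]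
          ring
      _ ≤ N * ∑ j ∈ Finset.Icc 1 N, ((j + N : ℕ) : ℝ) ^ (-α) := by
          gcongr
          simpa using Finset.card_nsmul_le_sum _ _ _ hterm
  refine Filter.tendsto_atTop_mono hlower ?_
  exact ((tendsto_rpow_atTop (by linarith)).comp tendsto_natCast_atTop_atTop).const_mul_atTop
    (by positivity)

theorem stmt15_general (α : ℝ) (hα : α ∈ Set.Ioo (1 : ℝ) 2)
    (p : ℕ → ℝ) (hp : ∀ i : ℕ, p i = ((i : ℝ) / (i + 1)) ^ α)
    (M : ℕ → ℕ → ℝ)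
    (hM : ∀ j k : ℕ, 1 ≤ j →
      M j k = if k = 1 then 1 - p j else if k = j + 1 then p j else 0)
    (hM0 : ∀ k : ℕ, M 0 k = 0)
    (P : ℕ → ℝ) (hP1 : P 1 = 1) (hPrec : ∀ j : ℕ, 1 ≤ j → P (j + 1) = P j * p j)
    (x : ℕ → ℝ) (hx1 : x 1 = (∑' j : ℕ, P (j + 1))⁻¹)
    (hxj : ∀ j : ℕ, 1 ≤ j → x j = x 1 * P j)
    (μ : Measure (ℤ → ℕ))
    (hshift : MeasurePreserving shift μ μ)
    (hcyl : ∀ (n : ℕ) (w : ℕ → ℕ),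
      μ {ω : ℤ → ℕ | ∀ i : ℕ, i ≤ n → ω (i : ℤ) = w i} =
        ENNReal.ofReal (x (w 0) * ∏ i ∈ Finset.range n, M (w i) (w (i + 1))))
    (U : Set (ℤ → ℕ)) (hU : U = {ω : ℤ → ℕ | ω 0 = 1}) :
    (∫⁻ ω in U, ((tauE shift U ω : ℝ≥0∞)) ∂μ) ≠ ⊤ ∧
      (∫⁻ ω, ((tauE shift U ω : ℝ≥0∞)) ∂μ) = ⊤ := by
  obtain ⟨hα1, hα2⟩ := hα
  subst hU
  have hP (j : ℕ) : P (j + 1) = ((j + 1 : ℕ) : ℝ) ^ (-α) :=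
    eq_rpow_neg_of_prod_ratio_rpow hp hP1 hPrec (Nat.le_add_left 1 j)
  have hsum : Summable fun j : ℕ => ((j + 1 : ℕ) : ℝ) ^ (-α) :=
    (summable_nat_add_iff 1).mpr (summable_nat_rpow.mpr (by linarith))
  have hx1pos : 0 < x 1 := by
    simp_rw [hx1, hP]
    exact inv_pos.mpr (hsum.tsum_pos (fun j => by positivity) 0 (by positivity))
  have hclimb {j : ℕ} (hj : 1 ≤ j) (n : ℕ) : μ (climbCylinder j n) =
      ENNReal.ofReal (x 1 * ((j + n : ℕ) : ℝ) ^ (-α)) := by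
    rw [measure_climbCylinder hM hPrec hxj hcyl hj,
      eq_rpow_neg_of_prod_ratio_rpow hp hP1 hPrec (by omega)]
  constructor
  · have hstep := (ae_transition_ne_zero hshift hcyl).mono fun ω hω i =>
      eq_one_or_eq_add_one_of_ne_zero hM hM0 (hω i)
    refine ne_top_of_le_ne_top ?_ (setLIntegral_tauE_le_tsum_measure_climbCylinder hstep)
    simp_rw [hclimb le_rfl, add_comm 1]
    rw [← ENNReal.ofReal_tsum_of_nonneg (fun n => by positivity) (hsum.mul_left _)]
    exact ofReal_ne_top
  · have hlower (N : ℕ) :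
        ENNReal.ofReal (x 1 * (N * ∑ j ∈ Finset.Icc 1 N, ((j + N : ℕ) : ℝ) ^ (-α))) ≤
          ∫⁻ ω, (tauE shift {ω | ω 0 = 1} ω : ℝ≥0∞) ∂μ := by
      calc _ = N * ∑ j ∈ Finset.Icc 1 N, μ (climbCylinder j N) := by
            rw [Finset.sum_congr rfl fun j hj => hclimb (Finset.mem_Icc.mp hj).1 N,
              ← ENNReal.ofReal_sum_of_nonneg (fun j _ => by positivity), ← ofReal_natCast,
              ← ENNReal.ofReal_mul (by positivity), ← Finset.mul_sum, mul_left_comm]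
        _ ≤ _ := natCast_mul_sum_measure_climbCylinder_le_lintegral_tauE N
    have hdiv := ENNReal.tendsto_ofReal_atTop.comp
      ((tendsto_natCast_mul_sum_rpow_neg_atTop (by linarith) hα2).const_mul_atTop hx1pos)
    exact top_unique (le_of_tendsto' hdiv hlower)

theorem stmt15 (α : ℝ) (hα : α ∈ Set.Ioo (1 : ℝ) 2)
    (p : ℕ → ℝ) (hp : ∀ i : ℕ, p i = ((i : ℝ) / (i + 1)) ^ α)
    (M : ℕ → ℕ → ℝ)
    (hM : ∀ j k : ℕ, 1 ≤ j →
      M j k = if k = 1 then 1 - p j else if k = j + 1 then p j else 0)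
    (hM0 : ∀ k : ℕ, M 0 k = 0)
    (P : ℕ → ℝ) (hP1 : P 1 = 1) (hPrec : ∀ j : ℕ, 1 ≤ j → P (j + 1) = P j * p j)
    (x : ℕ → ℝ) (hx0 : x 0 = 0) (hx1 : x 1 = (∑' j : ℕ, P (j + 1))⁻¹)
    (hxj : ∀ j : ℕ, 1 ≤ j → x j = x 1 * P j)
    (μ : Measure (ℤ → ℕ)) [IsProbabilityMeasure μ]
    (hshift : MeasurePreserving shift μ μ)
    (hcyl : ∀ (n : ℕ) (w : ℕ → ℕ),
      μ {ω : ℤ → ℕ | ∀ i : ℕ, i ≤ n → ω (i : ℤ) = w i} =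
        ENNReal.ofReal (x (w 0) * ∏ i ∈ Finset.range n, M (w i) (w (i + 1))))
    (U : Set (ℤ → ℕ)) (hU : U = {ω : ℤ → ℕ | ω 0 = 1}) :
    (∫⁻ ω in U, ((tauE shift U ω : ℝ≥0∞)) ∂μ) ≠ ⊤ ∧
      (∫⁻ ω, ((tauE shift U ω : ℝ≥0∞)) ∂μ) = ⊤ :=
  stmt15_general α hα p hp M hM hM0 P hP1 hPrec x hx1 hxj μ hshift hcyl U hU
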